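/- Let Q₈ be the subgroup of SU(2) generated by diag(i, -i) and [[0, 1], [-1, 0]], and let G be the subgroup of SU(2) generated by Q₈ together with A₀ = (1/2)·[[1+i, 1+i], [-1+i, 1-i]]. Then the abelianization G/[G, G] is isomorphic to the cyclic group ℤ/3ℤ. -/

import Mathlib

/-!
`Q₈ = ⟨d, j⟩` is normalised by `a = A₀`, which acts on it by `d ↦ j`, `j ↦ d j` and
satisfies `a³ = -1 = d² ∈ Q₈`. Since `Q₈` consists of diagonal and antidiagonal matrices
while `A₀` has no zero entry, `a ∉ Q₈`, so `G ⧸ Q₈` is cyclic of order `3`, generated by the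
image of `a`; in particular it is abelian and `[G, G] ≤ Q₈`. Conversely `d = ⁅a, j⁆` and
`j = ⁅a, d⁆ d`, so `Q₈ ≤ [G, G]`.
-/

open Matrix Complex

/-- The matrix `A₀ = (1/2)·[[1+i, 1+i], [-1+i, 1-i]]` from the homogeneous-space
description of the Gauss image of the isoparametric hypersurface with `g = 3`, `n = 3`. -/
noncomputable def A₀ : Matrix (Fin 2) (Fin 2) ℂ :=
  (2 : ℂ)⁻¹ • !![1 + I, 1 + I; -1 + I, 1 - I]

/-- The special unitary group `SU(2)`, realized as the subgroup of the unitary group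
`Matrix.unitaryGroup (Fin 2) ℂ` consisting of the matrices of determinant one. -/
def SU2 : Subgroup (Matrix.unitaryGroup (Fin 2) ℂ) where
  carrier := {A | Matrix.det (A : Matrix (Fin 2) (Fin 2) ℂ) = 1}
  one_mem' := by simp
  mul_mem' := by
    intro a b ha hb
    simp only [Set.mem_setOf_eq, Submonoid.coe_mul, Matrix.det_mul] at *
    rw [ha, hb, mul_one]
  inv_mem' := by
    intro a ha
    have h : ((a⁻¹ : Matrix.unitaryGroup (Fin 2) ℂ) : Matrix (Fin 2) (Fin 2) ℂ) *
        (a : Matrix (Fin 2) (Fin 2) ℂ) = 1 := by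
      have := congrArg (Subtype.val) (inv_mul_cancel a)
      simpa using this
    have hdet := congrArg Matrix.det h
    rw [Matrix.det_mul, Matrix.det_one] at hdet
    simp only [Set.mem_setOf_eq] at *
    rwa [ha, mul_one] at hdet

open scoped commutatorElement

namespace Subgroup

variable {G : Type*} [Group G]

theorem mem_normalizer_closure_of_conj_mem {s : Set G} {g : G}
    (hconj : ∀ x ∈ s, g * x * g⁻¹ ∈ closure s) (hconj' : ∀ x ∈ s, g⁻¹ * x * g ∈ closure s) :
    g ∈ normalizer (closure s) := by
  rw [mem_normalizer_iff_map_conj_eq, MonoidHom.map_closure]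
  refine le_antisymm ((closure_le _).mpr ?_) ?_
  · rintro _ ⟨x, hx, rfl⟩
    exact hconj x hx
  · rw [closure_le, ← MonoidHom.map_closure]
    exact fun x hx ↦ ⟨_, hconj' x hx, by simp [mul_assoc]⟩

theorem card_quotient_eq_prime {N : Subgroup G} [N.Normal] {s : Set G} {a : G} {p : ℕ}
    [Fact p.Prime] (hs : closure s = ⊤) (hsN : s ⊆ insert a (N : Set G))
    (hap : a ^ p ∈ N) (ha : a ∉ N) : Nat.card (G ⧸ N) = p := by
  set a' : G ⧸ N := QuotientGroup.mk a
  have hgen : zpowers a' = ⊤ := by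
    rw [eq_top_iff, ← map_top_of_surjective _ (QuotientGroup.mk'_surjective N), ← hs,
      MonoidHom.map_closure, closure_le]
    rintro _ ⟨x, hx, rfl⟩
    rcases hsN hx with rfl | hxN
    · exact mem_zpowers _
    · simp [(QuotientGroup.eq_one_iff x).mpr hxN]
  rw [← orderOf_eq_card_of_zpowers_eq_top hgen]
  exact orderOf_eq_prime (by rw [← QuotientGroup.mk_pow, QuotientGroup.eq_one_iff]; exact hap)
    (by rwa [Ne, QuotientGroup.eq_one_iff])

theorem commutator_eq_of_card_quotient_prime {N : Subgroup G} [N.Normal] {p : ℕ} [Fact p.Prime]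
    (hcard : Nat.card (G ⧸ N) = p) (hN : N ≤ _root_.commutator G) : _root_.commutator G = N :=
  have := isCyclic_of_prime_card hcard
  le_antisymm (Normal.quotient_commutative_iff_commutator_le.mp inferInstance) hN

end Subgroup

theorem Abelianization.nonempty_mulEquiv_zmod {G : Type*} [Group G] {N : Subgroup G} [N.Normal]
    {p : ℕ} [Fact p.Prime] (hcard : Nat.card (G ⧸ N) = p) (hN : N ≤ commutator G) :
    Nonempty (Abelianization G ≃* Multiplicative (ZMod p)) :=
  ⟨(QuotientGroup.quotientMulEquivOfEq
      (Subgroup.commutator_eq_of_card_quotient_prime hcard hN)).trans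
    (mulEquivOfPrimeCardEq hcard (by simp))⟩

open Subgroup in
theorem Abelianization.nonempty_mulEquiv_zmod_three_of_relations {G : Type*} [Group G]
    {d j a : G} (hgen : closure {d, j, a} = ⊤) (had : a * d = j * a) (haj : a * j = d * j * a)
    (hda : d * a = a * (d * j)) (ha3 : a ^ 3 = d ^ 2) (ha : a ∉ closure {d, j}) :
    Nonempty (Abelianization G ≃* Multiplicative (ZMod 3)) := by
  set N := closure {d, j}
  have hdN : d ∈ N := subset_closure (by simp)
  have hjN : j ∈ N := subset_closure (by simp)
  have ha_normalizes : a ∈ normalizer N := by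
    refine mem_normalizer_closure_of_conj_mem ?_ ?_ <;> rintro x (rfl | rfl)
    · rwa [had, mul_inv_cancel_right]
    · rw [haj, mul_inv_cancel_right]; exact mul_mem hdN hjN
    · rw [mul_assoc, hda, inv_mul_cancel_left]; exact mul_mem hdN hjN
    · rwa [mul_assoc, ← had, inv_mul_cancel_left]
  have : N.Normal := by
    rw [← normalizer_eq_top_iff, eq_top_iff, ← hgen, closure_le]
    rintro x (rfl | rfl | rfl)
    exacts [le_normalizer hdN, le_normalizer hjN, ha_normalizes]
  have hd_comm : d ∈ commutator G := by
    have : ⁅a, j⁆ = d := by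
      rw [commutatorElement_def, haj, mul_inv_cancel_right, mul_inv_cancel_right]
    exact this ▸ commutator_mem_commutator (mem_top a) (mem_top j)
  have hj_comm : j ∈ commutator G := by
    have : ⁅a, d⁆ * d = j := by
      rw [commutatorElement_def, had, mul_inv_cancel_right, inv_mul_cancel_right]
    exact this ▸ mul_mem (commutator_mem_commutator (mem_top a) (mem_top d)) hd_comm
  refine nonempty_mulEquiv_zmod (card_quotient_eq_prime hgen ?_ (ha3 ▸ pow_mem hdN 2) ha) ?_
  · rintro x (rfl | rfl | rfl) <;> simp [hdN, hjN]
  · rw [closure_le]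
    rintro x (rfl | rfl) <;> assumption

namespace Matrix

variable (R : Type*) [CommRing R] [StarRing R]

def unitaryDiagOrAntidiag : Subgroup (unitaryGroup (Fin 2) R) where
  carrier := {U | (U.1 0 1 = 0 ∧ U.1 1 0 = 0) ∨ (U.1 0 0 = 0 ∧ U.1 1 1 = 0)}
  one_mem' := by simp
  mul_mem' := by
    rintro U V (⟨hU₁, hU₂⟩ | ⟨hU₁, hU₂⟩) (⟨hV₁, hV₂⟩ | ⟨hV₁, hV₂⟩) <;>
      simp [mul_apply, Fin.sum_univ_two, *]
  inv_mem' := by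
    rintro U (⟨hU₁, hU₂⟩ | ⟨hU₁, hU₂⟩) <;> simp [star_apply, *]

end Matrix

theorem A₀_mul_diag : A₀ * !![I, 0; 0, -I] = !![0, 1; -1, 0] * A₀ := by
  ext i k; fin_cases i <;> fin_cases k <;> simp [A₀, mul_apply, Fin.sum_univ_two, Complex.ext_iff]

theorem A₀_mul_antidiag :
    A₀ * !![0, 1; -1, 0] = !![I, 0; 0, -I] * !![0, 1; -1, 0] * A₀ := by
  ext i k; fin_cases i <;> fin_cases k <;> simp [A₀, mul_apply, Fin.sum_univ_two, Complex.ext_iff]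

theorem diag_mul_A₀ : !![I, 0; 0, -I] * A₀ = A₀ * (!![I, 0; 0, -I] * !![0, 1; -1, 0]) := by
  ext i k; fin_cases i <;> fin_cases k <;> simp [A₀, mul_apply, Fin.sum_univ_two, Complex.ext_iff]

theorem A₀_pow_three : A₀ ^ 3 = !![I, 0; 0, -I] ^ 2 := by
  ext i k; fin_cases i <;> fin_cases k <;>
    norm_num [pow_succ, A₀, mul_apply, Fin.sum_univ_two, Complex.ext_iff]

theorem notMem_closure_of_eq_A₀ {G : Type*} [Group G] (ψ : G →* unitaryGroup (Fin 2) ℂ)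
    {d j a : G} (hd : (ψ d : Matrix (Fin 2) (Fin 2) ℂ) = !![I, 0; 0, -I])
    (hj : (ψ j : Matrix (Fin 2) (Fin 2) ℂ) = !![0, 1; -1, 0])
    (ha : (ψ a : Matrix (Fin 2) (Fin 2) ℂ) = A₀) : a ∉ Subgroup.closure {d, j} := by
  have hle : Subgroup.closure {d, j} ≤ (unitaryDiagOrAntidiag ℂ).comap ψ := by
    rw [Subgroup.closure_le]
    rintro x (rfl | rfl)
    · exact Or.inl (by simp [hd])
    · exact Or.inr (by simp [hj])
  intro h
  simpa [unitaryDiagOrAntidiag, ha, A₀, Complex.ext_iff] using hle h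

/-- The abelianization of `G = ⟨Q₈, A₀⟩` is isomorphic to the cyclic group `ℤ/3ℤ`. -/
theorem abelianization_iso_zmod3 (d j a : SU2)
    (hd : ((d : Matrix.unitaryGroup (Fin 2) ℂ) : Matrix (Fin 2) (Fin 2) ℂ) = !![I, 0; 0, -I])
    (hj : ((j : Matrix.unitaryGroup (Fin 2) ℂ) : Matrix (Fin 2) (Fin 2) ℂ) = !![0, 1; -1, 0])
    (ha : ((a : Matrix.unitaryGroup (Fin 2) ℂ) : Matrix (Fin 2) (Fin 2) ℂ) = A₀) :
    Nonempty (Abelianization (Subgroup.closure {d, j, a} : Subgroup SU2) ≃*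
      Multiplicative (ZMod 3)) := by
  set G := Subgroup.closure ({d, j, a} : Set SU2)
  let d' : G := ⟨d, Subgroup.subset_closure (by simp)⟩
  let j' : G := ⟨j, Subgroup.subset_closure (by simp)⟩
  let a' : G := ⟨a, Subgroup.subset_closure (by simp)⟩
  let ψ : G →* unitaryGroup (Fin 2) ℂ := SU2.subtype.comp G.subtype
  let ι : G →* Matrix (Fin 2) (Fin 2) ℂ := (unitaryGroup (Fin 2) ℂ).subtype.comp ψ
  have hι : Function.Injective ι :=
    Subtype.val_injective.comp (Subtype.val_injective.comp Subtype.val_injective)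
  have hd' : ι d' = !![I, 0; 0, -I] := hd
  have hj' : ι j' = !![0, 1; -1, 0] := hj
  have ha' : ι a' = A₀ := ha
  have hgen : Subgroup.closure {d', j', a'} = ⊤ := by
    apply Subgroup.map_injective G.subtype_injective
    rw [MonoidHom.map_closure, ← MonoidHom.range_eq_map, Subgroup.range_subtype]
    simp [Set.image_insert_eq, d', j', a', G]
  refine Abelianization.nonempty_mulEquiv_zmod_three_of_relations hgen ?_ ?_ ?_ ?_
      (notMem_closure_of_eq_A₀ ψ hd hj ha)
    <;> apply hι <;> simp only [map_mul, map_pow, hd', hj', ha']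
  exacts [A₀_mul_diag, A₀_mul_antidiag, diag_mul_A₀, A₀_pow_three]
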